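/- arXiv:2007.12109 — 2 statements merged into one kernel-verified Lean document; each statement's English description precedes it below -/
import Mathlib

section
/- For every conjugacy-invariant length function l on the free group F_k with l(α_i) ≤ 1 for all generators α_i, and every g ∈ F_k, one has l(g) ≤ ℓ_NC(g). Consequently ℓ_NC is the maximal conjugacy-invariant length function bounded by 1 on generators. -/
/-!
A non-crossing matching decomposes along the first letter of the word: that letter is either
unmatched, or matched with an inverse letter further on, so that the word reads `a B a⁻¹ C` with
`B` and `C` again matched. Hence the words with a non-crossing matching leaving `n` letters
unmatched are those generated from single letters (cost `1`) by nesting `W ↦ a W a⁻¹` and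
concatenation. A conjugation-invariant length that is at most `1` on generators is bounded by the
cost along this grammar, since nesting is a conjugation and concatenation is subadditive. The
grammar is closed under concatenation, inversion and conjugation of words, which makes `ℓ_NC`
itself a conjugation-invariant length.
-/

open scoped BigOperators

abbrev Letter (k : ℕ) := Fin k × Bool

def Letter.bar {k : ℕ} (x : Letter k) : Letter k := (x.1, !x.2)

/-- `M` is an (incomplete) non-crossing matching of the word `X`,
pairing letters with their inverse letters. -/
def IsNCMatching {k : ℕ} (X : List (Letter k)) (M : Finset (ℕ × ℕ)) : Prop :=
  (∀ p ∈ M, p.1 < p.2 ∧ p.2 < X.length ∧ X[p.1]? = (X[p.2]?).map Letter.bar) ∧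
  (∀ p ∈ M, ∀ q ∈ M, p ≠ q → p.1 ≠ q.1 ∧ p.1 ≠ q.2 ∧ p.2 ≠ q.1 ∧ p.2 ≠ q.2) ∧
  (∀ p ∈ M, ∀ q ∈ M, ¬ (p.1 < q.1 ∧ q.1 < p.2 ∧ p.2 < q.2))

/-- minimal number of unmatched letters over all non-crossing matchings of `X`. -/
noncomputable def ell {k : ℕ} (X : List (Letter k)) : ℕ :=
  sInf {m | ∃ M : Finset (ℕ × ℕ), IsNCMatching X M ∧ m = X.length - 2 * M.card}

/-- `L_k(n)`: the expected value of `ell` over uniformly random words of length `n`. -/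
noncomputable def Lk (k n : ℕ) : ℝ :=
  (∑ w : Fin n → Letter k, (ell (List.ofFn w) : ℝ)) / (2 * k) ^ n

noncomputable def lambda (k : ℕ) : ℝ := ⨅ n : ℕ+, Lk k n / n

theorem test : True := trivial

/-- The function induced by `ell` on the free group. -/
noncomputable def ellFG {k : ℕ} (g : FreeGroup (Fin k)) : ℕ :=
  sInf {m | ∃ X : List (Letter k), FreeGroup.mk X = g ∧ m = ell X}

/-- A conjugacy-invariant length function on a group `G`. -/
structure ConjInvLength (G : Type*) [Group G] where
  toFun : G → ℝ
  nonneg : ∀ g : G, 0 ≤ toFun g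
  map_one : toFun 1 = 0
  pos : ∀ g : G, g ≠ 1 → 0 < toFun g
  inv : ∀ g : G, toFun g⁻¹ = toFun g
  subadd : ∀ g h : G, toFun (g * h) ≤ toFun g + toFun h
  conj : ∀ g h : G, toFun (g * h * g⁻¹) = toFun h

@[simp]
lemma Letter.bar_bar {k : ℕ} (x : Letter k) : x.bar.bar = x := by simp [Letter.bar]

lemma Letter.invRev_singleton {k : ℕ} (a : Letter k) : FreeGroup.invRev [a] = [a.bar] := rfl

lemma Letter.mk_cons_append_bar {k : ℕ} (a : Letter k) (W : List (Letter k)) :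
    FreeGroup.mk (a :: W ++ [a.bar]) =
      FreeGroup.mk [a] * FreeGroup.mk W * (FreeGroup.mk [a])⁻¹ := by
  rw [FreeGroup.inv_mk, invRev_singleton, FreeGroup.mul_mk, FreeGroup.mul_mk]
  rfl

namespace NCMatching

def shiftPair (s : ℕ) (p : ℕ × ℕ) : ℕ × ℕ := (p.1 + s, p.2 + s)

lemma shiftPair_injective (s : ℕ) : Function.Injective (shiftPair s) := by
  rintro ⟨a, b⟩ ⟨c, d⟩ h
  simp only [shiftPair, Prod.mk.injEq] at h ⊢
  omega

noncomputable def window (M : Finset (ℕ × ℕ)) (s t : ℕ) : Finset (ℕ × ℕ) :=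
  (M.preimage (shiftPair s) (shiftPair_injective s).injOn).filter (·.2 < t)

@[simp]
lemma mem_window {M : Finset (ℕ × ℕ)} {s t : ℕ} {q : ℕ × ℕ} :
    q ∈ window M s t ↔ shiftPair s q ∈ M ∧ q.2 < t := by
  simp [window]

lemma mem_image_window {M : Finset (ℕ × ℕ)} {s t : ℕ} {p : ℕ × ℕ} (hp : p ∈ M)
    (hs : s ≤ p.1) (ht : p.2 < s + t) (hlt : p.1 < p.2) :
    p ∈ (window M s t).image (shiftPair s) := by
  refine Finset.mem_image.2 ⟨(p.1 - s, p.2 - s), ?_, ?_⟩ <;>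
    simp only [mem_window, shiftPair, Nat.sub_add_cancel hs,
      Nat.sub_add_cancel (hs.trans hlt.le)]
  exact ⟨hp, by omega⟩

end NCMatching

namespace IsNCMatching

open NCMatching

variable {k : ℕ} {a : Letter k} {X Y Z : List (Letter k)} {M N : Finset (ℕ × ℕ)}

lemma empty (X : List (Letter k)) : IsNCMatching X ∅ := ⟨by simp, by simp, by simp⟩

lemma singleton {i j : ℕ} (hij : i < j) (hj : j < X.length)
    (hX : X[i]? = X[j]?.map Letter.bar) : IsNCMatching X {(i, j)} :=
  ⟨by simp [hij, hj, hX], by simp, by simp⟩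

lemma two_mul_card_le (h : IsNCMatching X M) : 2 * M.card ≤ X.length := by
  obtain ⟨hvalid, hdisj, -⟩ := h
  have hcard : (M.image Prod.fst ∪ M.image Prod.snd).card = 2 * M.card := by
    rw [Finset.card_union_of_disjoint, Finset.card_image_of_injOn, Finset.card_image_of_injOn]
    · ring
    · intro p hp q hq hpq
      by_contra hne
      exact (hdisj p hp q hq hne).2.2.2 hpq
    · intro p hp q hq hpq
      by_contra hne
      exact (hdisj p hp q hq hne).1 hpq
    · simp only [Finset.disjoint_left, Finset.mem_image, not_exists, not_and]
      rintro _ ⟨p, hp, rfl⟩ q hq hqp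
      by_cases hpq : p = q
      · subst hpq; exact (hvalid p hp).1.ne hqp.symm
      · exact (hdisj p hp q hq hpq).2.1 hqp.symm
  have hsub : M.image Prod.fst ∪ M.image Prod.snd ⊆ Finset.range X.length := by
    intro x hx
    simp only [Finset.mem_union, Finset.mem_image] at hx
    rcases hx with ⟨p, hp, rfl⟩ | ⟨p, hp, rfl⟩ <;>
      · have := hvalid p hp; simp only [Finset.mem_range]; omega
  simpa [hcard] using Finset.card_le_card hsub

lemma union (hM : IsNCMatching X M) (hN : IsNCMatching X N)
    (hMN : ∀ p ∈ M, ∀ q ∈ N, p.2 < q.1 ∨ q.1 < p.1 ∧ p.2 < q.2) :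
    IsNCMatching X (M ∪ N) := by
  refine ⟨fun p hp => ?_, fun p hp q hq hpq => ?_, fun p hp q hq => ?_⟩
  · rcases Finset.mem_union.1 hp with hp | hp
    exacts [hM.1 p hp, hN.1 p hp]
  · rcases Finset.mem_union.1 hp with hp | hp <;> rcases Finset.mem_union.1 hq with hq | hq
    · exact hM.2.1 p hp q hq hpq
    · have := hMN p hp q hq; have := (hM.1 p hp).1; have := (hN.1 q hq).1; omega
    · have := hMN q hq p hp; have := (hN.1 p hp).1; have := (hM.1 q hq).1; omega
    · exact hN.2.1 p hp q hq hpq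
  · rcases Finset.mem_union.1 hp with hp | hp <;> rcases Finset.mem_union.1 hq with hq | hq
    · exact hM.2.2 p hp q hq
    · have := hMN p hp q hq; have := (hM.1 p hp).1; omega
    · have := hMN q hq p hp; have := (hN.1 p hp).1; omega
    · exact hN.2.2 p hp q hq

lemma append_right (h : IsNCMatching X M) (Y : List (Letter k)) :
    IsNCMatching (X ++ Y) M := by
  refine ⟨fun p hp => ?_, h.2⟩
  obtain ⟨hlt, hlen, hbar⟩ := h.1 p hp
  refine ⟨hlt, by rw [List.length_append]; omega, ?_⟩
  rwa [List.getElem?_append_left (by omega), List.getElem?_append_left hlen]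

lemma shift (h : IsNCMatching Y M) (X : List (Letter k)) :
    IsNCMatching (X ++ Y) (M.image (shiftPair X.length)) := by
  simp only [IsNCMatching, Finset.forall_mem_image, shiftPair]
  refine ⟨fun p hp => ?_, fun p hp q hq hpq => ?_, fun p hp q hq => ?_⟩
  · obtain ⟨hlt, hlen, hbar⟩ := h.1 p hp
    refine ⟨by omega, by rw [List.length_append]; omega, ?_⟩
    rwa [List.getElem?_append_right (by omega), List.getElem?_append_right (by omega),
      Nat.add_sub_cancel, Nat.add_sub_cancel]
  · have := h.2.1 p hp q hq (fun h => hpq (h ▸ rfl)); omega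
  · have := h.2.2 p hp q hq; omega

lemma window (h : IsNCMatching (X ++ Y ++ Z) M) :
    IsNCMatching Y (window M X.length Y.length) := by
  simp only [IsNCMatching, mem_window, shiftPair, and_imp]
  refine ⟨fun p hp hpY => ?_, fun p hp _ q hq _ hpq => ?_, fun p hp _ q hq _ => ?_⟩
  · obtain ⟨hlt, -, hbar⟩ := h.1 _ hp
    have hget : ∀ i < Y.length, (X ++ Y ++ Z)[i + X.length]? = Y[i]? := fun i hi => by
      rw [List.getElem?_append_left (by rw [List.length_append]; omega), List.getElem?_append_right (by omega),
        Nat.add_sub_cancel]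
    simp only at hlt hbar
    exact ⟨by omega, hpY, by rwa [hget _ (by omega), hget _ hpY] at hbar⟩
  · have := h.2.1 _ hp _ hq (fun h => hpq (shiftPair_injective _ h)); simp only at this; omega
  · have := h.2.2 _ hp _ hq; simp only at this; omega

lemma exists_tail_of_unmatched (h : IsNCMatching (a :: X) M) (h0 : ∀ j, (0, j) ∉ M) :
    ∃ M', IsNCMatching X M' ∧ M.card ≤ M'.card := by
  have h' : IsNCMatching ([a] ++ X ++ []) M := by simpa using h
  refine ⟨_, h'.window, ?_⟩
  have hsub : M ⊆ (NCMatching.window M 1 X.length).image (shiftPair 1) := fun p hp => by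
    obtain ⟨hlt, hlen, -⟩ := h.1 p hp
    have : p.1 ≠ 0 := fun h1 => h0 p.2 (h1 ▸ hp)
    exact mem_image_window hp (by omega) (by rw [List.length_cons] at hlen; omega) hlt
  exact (Finset.card_le_card hsub).trans Finset.card_image_le

lemma exists_split_of_matched {j : ℕ} (h : IsNCMatching (a :: X) M) (hj : (0, j) ∈ M) :
    ∃ B C MB MC, X = B ++ a.bar :: C ∧ IsNCMatching B MB ∧ IsNCMatching C MC ∧
      M.card ≤ MB.card + MC.card + 1 := by
  obtain ⟨hj0, hjlen, hbar⟩ := h.1 _ hj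
  obtain ⟨i, rfl⟩ : ∃ i, j = i + 1 := ⟨j - 1, by simp only at hj0; omega⟩
  simp only [List.length_cons, add_lt_add_iff_right] at hjlen
  have hXi : X[i] = a.bar := by
    simp only [List.getElem?_cons_zero, List.getElem?_cons_succ,
      List.getElem?_eq_getElem hjlen, Option.map_some, Option.some.injEq] at hbar
    simp [hbar]
  have hX : X = X.take i ++ a.bar :: X.drop (i + 1) := by
    rw [← hXi, ← List.drop_eq_getElem_cons hjlen, List.take_append_drop]
  set B := X.take i
  set C := X.drop (i + 1)
  have hB : B.length = i := List.length_take_of_le hjlen.le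
  have hC : C.length + (i + 1) = X.length := by simp only [List.length_drop, C]; omega
  have hP : (a :: B ++ [a.bar]).length = i + 2 := by simp [hB]
  have hBwin : IsNCMatching ([a] ++ B ++ a.bar :: C) M := by rw [hX] at h; simpa using h
  have hCwin : IsNCMatching ((a :: B ++ [a.bar]) ++ C ++ []) M := by rw [hX] at h; simpa using h
  refine ⟨B, C, _, _, hX, hBwin.window, hCwin.window, ?_⟩
  have hsub : M ⊆ insert (0, i + 1) ((NCMatching.window M 1 B.length).image (shiftPair 1) ∪
      (NCMatching.window M (a :: B ++ [a.bar]).length C.length).image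
        (shiftPair (a :: B ++ [a.bar]).length)) := fun p hp => by
    obtain ⟨hlt, hlen, -⟩ := h.1 p hp
    simp only [List.length_cons] at hlen
    by_cases hpj : p = (0, i + 1)
    · exact Finset.mem_insert.2 (Or.inl hpj)
    have hdisj := h.2.1 p hp _ hj hpj
    have hnest := h.2.2 _ hj p hp
    simp only at hdisj hnest
    refine Finset.mem_insert_of_mem (Finset.mem_union.2 ?_)
    by_cases hin : p.2 < i + 1
    · exact Or.inl (mem_image_window hp (by omega) (by omega) hlt)
    · exact Or.inr (mem_image_window hp (by rw [hP]; omega) (by rw [hP]; omega) hlt)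
  calc M.card ≤ _ := Finset.card_le_card hsub
    _ ≤ _ + 1 := Finset.card_insert_le _ _
    _ ≤ _ := by
      gcongr
      exact (Finset.card_union_le _ _).trans (add_le_add Finset.card_image_le Finset.card_image_le)

end IsNCMatching

/-- `NCCost X n` says that `X` has a non-crossing matching with `n` unmatched letters, described
by the context-free grammar of such matchings. -/
inductive NCCost {k : ℕ} : List (Letter k) → ℕ → Prop
  | nil : NCCost [] 0
  | single (a : Letter k) : NCCost [a] 1
  | pair (a : Letter k) {W : List (Letter k)} {n : ℕ} :
      NCCost W n → NCCost (a :: W ++ [a.bar]) n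
  | append {X Y : List (Letter k)} {m n : ℕ} :
      NCCost X m → NCCost Y n → NCCost (X ++ Y) (m + n)

namespace NCCost

open NCMatching

variable {k : ℕ} {X W : List (Letter k)} {n : ℕ}

lemma exists_isNCMatching (h : NCCost X n) :
    ∃ M, IsNCMatching X M ∧ X.length = n + 2 * M.card := by
  induction h with
  | nil => exact ⟨∅, .empty _, rfl⟩
  | single a => exact ⟨∅, .empty _, rfl⟩
  | @pair a W n _ ih =>
    obtain ⟨M, hM, hlen⟩ := ih
    have hinner : IsNCMatching ([a] ++ W ++ [a.bar]) (M.image (shiftPair 1)) :=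
      (hM.shift [a]).append_right _
    have hout : IsNCMatching ([a] ++ W ++ [a.bar]) {(0, W.length + 1)} :=
      .singleton (by omega) (by simp) (by simp)
    have hnested : ∀ p ∈ M.image (shiftPair 1),
        ∀ q ∈ ({(0, W.length + 1)} : Finset (ℕ × ℕ)), p.2 < q.1 ∨ q.1 < p.1 ∧ p.2 < q.2 := by
      simp only [Finset.forall_mem_image, Finset.mem_singleton, forall_eq, shiftPair]
      intro p hp
      have := hM.1 p hp
      omega
    refine ⟨M.image (shiftPair 1) ∪ {(0, W.length + 1)}, ?_, ?_⟩
    · simpa only [List.singleton_append, List.cons_append, List.nil_append]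
        using hinner.union hout hnested
    · rw [Finset.card_union_of_disjoint, Finset.card_image_of_injective _ (shiftPair_injective 1)]
      · simp only [List.cons_append, List.length_cons, List.length_append, List.length_nil, hlen,
          Finset.card_singleton]
        ring
      · simp [shiftPair]
  | @append X Y m n _ _ ihX ihY =>
    obtain ⟨MX, hMX, hX⟩ := ihX
    obtain ⟨MY, hMY, hY⟩ := ihY
    refine ⟨MX ∪ MY.image (shiftPair X.length),
      (hMX.append_right Y).union (hMY.shift X) ?_, ?_⟩
    · simp only [Finset.forall_mem_image, shiftPair]
      intro p hp q _
      have := hMX.1 p hp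
      omega
    · rw [Finset.card_union_of_disjoint, Finset.card_image_of_injective _ (shiftPair_injective _),
        List.length_append, hX, hY]
      · ring
      · simp only [Finset.disjoint_left, Finset.mem_image, shiftPair, not_exists, not_and]
        intro p hp q _ hqp
        have := hMX.1 p hp
        rw [← hqp] at this
        omega


lemma invRev (h : NCCost X n) : NCCost (FreeGroup.invRev X) n := by
  induction h with
  | nil => exact .nil
  | single a => exact .single a.bar
  | @pair a W n _ ih =>
    rw [List.cons_append, FreeGroup.invRev_cons, FreeGroup.invRev_append, Letter.invRev_singleton,
      Letter.invRev_singleton, Letter.bar_bar]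
    simpa using ih.pair a
  | append _ _ ihX ihY =>
    rw [FreeGroup.invRev_append, add_comm]
    exact ihY.append ihX

lemma conj (h : NCCost W n) (U : List (Letter k)) :
    NCCost (U ++ W ++ FreeGroup.invRev U) n := by
  induction U with
  | nil => simpa [FreeGroup.invRev_empty] using h
  | cons a U ih =>
    rw [FreeGroup.invRev_cons, Letter.invRev_singleton]
    simpa using ih.pair a

lemma mk_eq_one (h : NCCost X 0) : FreeGroup.mk X = 1 := by
  generalize hn : (0 : ℕ) = n at h
  induction h with
  | nil => rfl
  | single => omega
  | pair a _ ih => rw [Letter.mk_cons_append_bar, ih hn, mul_one, mul_inv_cancel]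
  | append _ _ ihX ihY => rw [← FreeGroup.mul_mk, ihX (by omega), ihY (by omega), mul_one]

end NCCost

lemma IsNCMatching.exists_ncCost {k : ℕ} :
    ∀ {X : List (Letter k)} {M : Finset (ℕ × ℕ)}, IsNCMatching X M →
      ∃ n, NCCost X n ∧ n + 2 * M.card ≤ X.length
  | [], _, h => ⟨0, .nil, by simpa using h.two_mul_card_le⟩
  | a :: X, M, h => by
    by_cases hfirst : ∃ j, (0, j) ∈ M
    · obtain ⟨j, hj⟩ := hfirst
      obtain ⟨B, C, MB, MC, hX, hB, hC, hcard⟩ := h.exists_split_of_matched hj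
      obtain ⟨m, hm, hmB⟩ := hB.exists_ncCost
      obtain ⟨n, hn, hnC⟩ := hC.exists_ncCost
      subst hX
      refine ⟨m + n, by simpa using (hm.pair a).append hn, ?_⟩
      simp only [List.length_cons, List.length_append]
      omega
    · simp only [not_exists] at hfirst
      obtain ⟨M', hM', hcard⟩ := h.exists_tail_of_unmatched hfirst
      obtain ⟨n, hn, hle⟩ := hM'.exists_ncCost
      refine ⟨1 + n, (NCCost.single a).append hn, ?_⟩
      simp only [List.length_cons]
      omega
termination_by X => X.length
decreasing_by all_goals subst_vars; simp <;> omega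

namespace ConjInvLength

variable {k : ℕ} (l : ConjInvLength (FreeGroup (Fin k)))

lemma toFun_mk_singleton_le (hl : ∀ i, l.toFun (FreeGroup.of i) ≤ 1) (a : Letter k) :
    l.toFun (FreeGroup.mk [a]) ≤ 1 := by
  obtain ⟨i, _ | _⟩ := a
  · rw [← l.inv, FreeGroup.inv_mk]
    exact hl i
  · exact hl i

lemma toFun_mk_le_of_ncCost (hl : ∀ i, l.toFun (FreeGroup.of i) ≤ 1) {X : List (Letter k)}
    {n : ℕ} (h : NCCost X n) : l.toFun (FreeGroup.mk X) ≤ n := by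
  induction h with
  | nil => simp [← FreeGroup.one_eq_mk, l.map_one]
  | single a => simpa using l.toFun_mk_singleton_le hl a
  | pair a W ih => rwa [Letter.mk_cons_append_bar, l.conj]
  | append _ _ ihX ihY =>
    rw [← FreeGroup.mul_mk, Nat.cast_add]
    exact (l.subadd _ _).trans (add_le_add ihX ihY)

end ConjInvLength

section ell

variable {k : ℕ} {X : List (Letter k)} {g : FreeGroup (Fin k)} {n : ℕ}

lemma ell_le_of_ncCost (h : NCCost X n) : ell X ≤ n := by
  obtain ⟨M, hM, hlen⟩ := h.exists_isNCMatching
  unfold ell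
  exact Nat.sInf_le ⟨M, hM, by omega⟩

lemma ncCost_ell (X : List (Letter k)) : NCCost X (ell X) := by
  obtain ⟨M, hM, hell⟩ :
      ell X ∈ {m | ∃ M : Finset (ℕ × ℕ), IsNCMatching X M ∧ m = X.length - 2 * M.card} :=
    Nat.sInf_mem ⟨_, ∅, .empty X, rfl⟩
  obtain ⟨n, hn, hle⟩ := hM.exists_ncCost
  obtain rfl : n = ell X := le_antisymm (by omega) (ell_le_of_ncCost hn)
  exact hn

lemma ellFG_le_of_ncCost (hX : FreeGroup.mk X = g) (h : NCCost X n) : ellFG g ≤ n := by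
  refine (Nat.sInf_le ?_).trans (ell_le_of_ncCost h)
  exact ⟨X, hX, rfl⟩

lemma exists_ncCost_ellFG (g : FreeGroup (Fin k)) :
    ∃ X, FreeGroup.mk X = g ∧ NCCost X (ellFG g) := by
  obtain ⟨X, hX, hg⟩ :
      ellFG g ∈ {m | ∃ X : List (Letter k), FreeGroup.mk X = g ∧ m = ell X} :=
    Nat.sInf_mem ⟨_, g.toWord, FreeGroup.mk_toWord, rfl⟩
  exact ⟨X, hX, hg ▸ ncCost_ell X⟩

lemma ellFG_one : ellFG (1 : FreeGroup (Fin k)) = 0 :=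
  Nat.le_zero.1 (ellFG_le_of_ncCost FreeGroup.one_eq_mk.symm .nil)

lemma ellFG_of_le_one (i : Fin k) : ellFG (FreeGroup.of i) ≤ 1 :=
  ellFG_le_of_ncCost rfl (.single _)

lemma ellFG_pos (hg : g ≠ 1) : 0 < ellFG g := by
  obtain ⟨X, rfl, hX⟩ := exists_ncCost_ellFG g
  exact Nat.pos_of_ne_zero fun h0 => hg (h0 ▸ hX).mk_eq_one

lemma ellFG_mul_le (g h : FreeGroup (Fin k)) : ellFG (g * h) ≤ ellFG g + ellFG h := by
  obtain ⟨X, rfl, hX⟩ := exists_ncCost_ellFG g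
  obtain ⟨Y, rfl, hY⟩ := exists_ncCost_ellFG h
  exact ellFG_le_of_ncCost FreeGroup.mul_mk (hX.append hY)

lemma ellFG_inv_le (g : FreeGroup (Fin k)) : ellFG g⁻¹ ≤ ellFG g := by
  obtain ⟨X, rfl, hX⟩ := exists_ncCost_ellFG g
  exact ellFG_le_of_ncCost FreeGroup.inv_mk.symm hX.invRev

lemma ellFG_inv (g : FreeGroup (Fin k)) : ellFG g⁻¹ = ellFG g :=
  le_antisymm (ellFG_inv_le g) (by simpa using ellFG_inv_le g⁻¹)

lemma ellFG_conj_le (g h : FreeGroup (Fin k)) : ellFG (g * h * g⁻¹) ≤ ellFG h := by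
  obtain ⟨W, rfl, hW⟩ := exists_ncCost_ellFG h
  refine ellFG_le_of_ncCost ?_ (hW.conj g.toWord)
  rw [← FreeGroup.mul_mk, ← FreeGroup.mul_mk, ← FreeGroup.inv_mk, FreeGroup.mk_toWord]

lemma ellFG_conj (g h : FreeGroup (Fin k)) : ellFG (g * h * g⁻¹) = ellFG h := by
  refine le_antisymm (ellFG_conj_le g h) ?_
  simpa [mul_assoc] using ellFG_conj_le g⁻¹ (g * h * g⁻¹)

end ell

noncomputable def ncLength (k : ℕ) : ConjInvLength (FreeGroup (Fin k)) where
  toFun g := ellFG g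
  nonneg _ := Nat.cast_nonneg _
  map_one := by simp [ellFG_one]
  pos _ hg := Nat.cast_pos.2 (ellFG_pos hg)
  inv g := by simp [ellFG_inv]
  subadd g h := by exact_mod_cast ellFG_mul_le g h
  conj g h := by simp [ellFG_conj]

/-- Every conjugacy-invariant length function bounded by 1 on the generators is dominated
by `ℓ_NC`; consequently `ℓ_NC` is the maximal such length function. -/
theorem ellFG_maximal (k : ℕ) :
    (∀ l : ConjInvLength (FreeGroup (Fin k)),
      (∀ i : Fin k, l.toFun (FreeGroup.of i) ≤ 1) →
      ∀ g : FreeGroup (Fin k), l.toFun g ≤ (ellFG g : ℝ)) ∧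
    (∃ lNC : ConjInvLength (FreeGroup (Fin k)),
      (∀ g : FreeGroup (Fin k), lNC.toFun g = (ellFG g : ℝ)) ∧
      (∀ i : Fin k, lNC.toFun (FreeGroup.of i) ≤ 1)) := by
  refine ⟨fun l hl g => ?_, ncLength k, fun _ => rfl, fun i => ?_⟩
  · obtain ⟨X, rfl, hX⟩ := exists_ncCost_ellFG g
    exact l.toFun_mk_le_of_ncCost hl hX
  · exact Nat.cast_le_one.2 (ellFG_of_le_one i)
end

section
/- λ_k ≤ λ_{k+1} for all k ≥ 1: the asymptotic expected unmatched fraction is nondecreasing in the number of generator pairs k. -/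
open scoped BigOperators

/-! Deleting the pair `i` from a word `X` over `k + 1` pairs keeps every matched pair of an
optimal non-crossing matching of `X` whose letters are not `i^{±1}`, so
`∑ᵢ ℓ(X ∖ i) ≤ k ℓ(X)`, while `∑ᵢ |X ∖ i| = k |X|`. For a uniform word, conditionally on its
length, `X ∖ i` is a uniform word over `k` pairs, and `L_k(m) ≥ m λ_k`; hence
`E ℓ(X ∖ i) ≥ λ_k E |X ∖ i|`. Summing over `i` gives `k n λ_k ≤ k L_{k+1}(n)`. -/

open Finset

section Matching

variable {k : ℕ}

theorem isNCMatching_empty (X : List (Letter k)) : IsNCMatching X ∅ := by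
  refine ⟨?_, ?_, ?_⟩ <;> simp

theorem exists_isNCMatching_ell_eq (X : List (Letter k)) :
    ∃ M, IsNCMatching X M ∧ ell X = X.length - 2 * #M :=
  Nat.sInf_mem (s := {m | ∃ M, IsNCMatching X M ∧ m = X.length - 2 * #M})
    ⟨X.length, ∅, isNCMatching_empty X, by simp⟩

theorem IsNCMatching.two_mul_card_le_s14 {X : List (Letter k)} {M : Finset (ℕ × ℕ)}
    (hM : IsNCMatching X M) : 2 * #M ≤ X.length := by
  let endpoint : (ℕ × ℕ) × Bool → ℕ := fun pb => if pb.2 then pb.1.1 else pb.1.2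
  have hmaps : ∀ pb ∈ M ×ˢ (univ : Finset Bool), endpoint pb ∈ range X.length := by
    rintro ⟨p, b⟩ hp
    obtain ⟨h12, h2, -⟩ := hM.1 p (mem_product.1 hp).1
    cases b <;> simp [endpoint] <;> omega
  have hinj : Set.InjOn endpoint ↑(M ×ˢ (univ : Finset Bool)) := by
    rintro ⟨p, b⟩ hp ⟨q, c⟩ hq heq
    simp only [coe_product, Set.mem_prod, mem_coe] at hp hq
    by_cases hpq : p = q
    · subst hpq
      have hlt := (hM.1 p hp.1).1
      cases b <;> cases c <;> simp_all [endpoint]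
    · have hne := hM.2.1 p hp.1 q hq.1 hpq
      cases b <;> cases c <;> simp_all [endpoint]
  simpa [mul_comm] using card_le_card_of_injOn endpoint hmaps hinj

theorem IsNCMatching.ell_add_two_mul_card_le {X : List (Letter k)} {M : Finset (ℕ × ℕ)}
    (hM : IsNCMatching X M) : ell X + 2 * #M ≤ X.length := by
  have := Nat.sInf_le (s := {m | ∃ M, IsNCMatching X M ∧ m = X.length - 2 * #M}) ⟨M, hM, rfl⟩
  have := hM.two_mul_card_le_s14
  unfold ell
  omega

theorem isNCMatching_map_iff {k' : ℕ} {φ : Letter k → Letter k'} (hφ : φ.Injective)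
    (hbar : ∀ a, φ a.bar = (φ a).bar) {X : List (Letter k)} {M : Finset (ℕ × ℕ)} :
    IsNCMatching (X.map φ) M ↔ IsNCMatching X M := by
  have hmap : ∀ x y : Option (Letter k),
      x.map φ = (y.map φ).map Letter.bar ↔ x = y.map Letter.bar := by
    intro x y
    rw [Option.map_map, show Letter.bar ∘ φ = φ ∘ Letter.bar from funext fun a => (hbar a).symm,
      ← Option.map_map]
    exact (Option.map_injective hφ).eq_iff
  simp only [IsNCMatching, List.length_map, List.getElem?_map, hmap]

theorem ell_map {k' : ℕ} {φ : Letter k → Letter k'} (hφ : φ.Injective)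
    (hbar : ∀ a, φ a.bar = (φ a).bar) (X : List (Letter k)) : ell (X.map φ) = ell X := by
  simp only [ell, List.length_map, isNCMatching_map_iff hφ hbar]

theorem IsNCMatching.image_of_strictMonoOn {X Y : List (Letter k)} {M : Finset (ℕ × ℕ)}
    (hM : IsNCMatching X M) {S : Set ℕ} {f : ℕ → ℕ} (hf : StrictMonoOn f S)
    (hMS : ∀ p ∈ M, p.1 ∈ S ∧ p.2 ∈ S) (hXY : ∀ t ∈ S, Y[f t]? = X[t]?) :
    IsNCMatching Y (M.image (Prod.map f f)) := by
  refine ⟨?_, ?_, ?_⟩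
  · simp only [mem_image, Prod.map, forall_exists_index, and_imp]
    rintro _ p hp rfl
    obtain ⟨h12, h2, hbar⟩ := hM.1 p hp
    refine ⟨hf (hMS p hp).1 (hMS p hp).2 h12, ?_,
      by rw [hXY _ (hMS p hp).1, hXY _ (hMS p hp).2, hbar]⟩
    have : Y[f p.2]? ≠ none := by simp [hXY _ (hMS p hp).2, h2]
    simpa using List.getElem?_eq_none_iff.not.1 this
  · simp only [mem_image, Prod.map, forall_exists_index, and_imp]
    rintro _ p hp rfl _ q hq rfl hpq
    have hne := hM.2.1 p hp q hq (by rintro rfl; exact hpq rfl)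
    have hinj := hf.injOn
    refine ⟨?_, ?_, ?_, ?_⟩ <;> intro h
    · exact hne.1 (hinj (hMS p hp).1 (hMS q hq).1 h)
    · exact hne.2.1 (hinj (hMS p hp).1 (hMS q hq).2 h)
    · exact hne.2.2.1 (hinj (hMS p hp).2 (hMS q hq).1 h)
    · exact hne.2.2.2 (hinj (hMS p hp).2 (hMS q hq).2 h)
  · simp only [mem_image, Prod.map, forall_exists_index, and_imp]
    rintro _ p hp rfl _ q hq rfl
    simp only [hf.lt_iff_lt (hMS p hp).1 (hMS q hq).1, hf.lt_iff_lt (hMS q hq).1 (hMS p hp).2,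
      hf.lt_iff_lt (hMS p hp).2 (hMS q hq).2]
    exact hM.2.2 p hp q hq

theorem card_image_prodMap_of_injOn {M : Finset (ℕ × ℕ)} {S : Set ℕ} {f : ℕ → ℕ}
    (hf : S.InjOn f) (hMS : ∀ p ∈ M, p.1 ∈ S ∧ p.2 ∈ S) :
    #(M.image (Prod.map f f)) = #M :=
  card_image_of_injOn fun p hp q hq h => Prod.ext
    (hf (hMS p hp).1 (hMS q hq).1 (congrArg Prod.fst h))
    (hf (hMS p hp).2 (hMS q hq).2 (congrArg Prod.snd h))

end Matching

section FilterIndex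

variable {α : Type*} (P : α → Bool) (X : List α)

theorem strictMonoOn_countP_take :
    StrictMonoOn (fun t => (X.take t).countP P) {t | X[t]?.any P} := by
  intro s hs t _ hst
  obtain ⟨a, ha, hPa⟩ := (Option.any_eq_true _ _).1 hs
  calc (X.take s).countP P < (X.take (s + 1)).countP P := by
        simp [List.take_add_one, ha, hPa]
    _ ≤ (X.take t).countP P := (List.take_sublist_take_left hst).countP_le

theorem getElem?_filter_countP_take {t : ℕ} (ht : X[t]?.any P) :
    (X.filter P)[(X.take t).countP P]? = X[t]? := by
  obtain ⟨a, ha, hPa⟩ := (Option.any_eq_true _ _).1 ht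
  obtain ⟨hlt, rfl⟩ := List.getElem?_eq_some_iff.1 ha
  calc (X.filter P)[(X.take t).countP P]?
      = ((X.take t ++ X[t] :: X.drop (t + 1)).filter P)[(X.take t).countP P]? := by
        rw [← List.drop_eq_getElem_cons hlt, List.take_append_drop]
    _ = X[t]? := by
        rw [List.filter_append, List.filter_cons_of_pos hPa, List.countP_eq_length_filter,
          List.getElem?_append_right le_rfl, Nat.sub_self, List.getElem?_cons_zero, ha]

end FilterIndex

section Deletion

variable {k : ℕ}

theorem IsNCMatching.mono {X : List (Letter k)} {M N : Finset (ℕ × ℕ)} (hM : IsNCMatching X M)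
    (hNM : N ⊆ M) : IsNCMatching X N :=
  ⟨fun p hp => hM.1 p (hNM hp), fun p hp q hq => hM.2.1 p (hNM hp) q (hNM hq),
    fun p hp q hq => hM.2.2 p (hNM hp) q (hNM hq)⟩

theorem IsNCMatching.ell_filter_add_two_mul_card_le {X : List (Letter k)}
    {M : Finset (ℕ × ℕ)} (hM : IsNCMatching X M) (P : Letter k → Bool)
    (hP : ∀ a, P a.bar = P a) :
    ell (X.filter P) + 2 * #{p ∈ M | X[p.2]?.any P} ≤ (X.filter P).length := by
  have hMS : ∀ p ∈ {p ∈ M | X[p.2]?.any P},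
      p.1 ∈ {t | X[t]?.any P} ∧ p.2 ∈ {t | X[t]?.any P} := by
    intro p hp
    rw [mem_filter] at hp
    refine ⟨?_, hp.2⟩
    simpa [(hM.1 p hp.1).2.2, Option.any_map, hP] using hp.2
  have hf := strictMonoOn_countP_take P X
  rw [← card_image_prodMap_of_injOn hf.injOn hMS]
  exact ((hM.mono (filter_subset _ _)).image_of_strictMonoOn hf hMS
    fun t ht => getElem?_filter_countP_take P X ht).ell_add_two_mul_card_le

def deletePair (i : Fin k) (X : List (Letter k)) : List (Letter k) := X.filter (·.1 ≠ i)

theorem sum_ite_ne_eq (a : Fin (k + 1)) : ∑ i, (if a ≠ i then 1 else 0 : ℕ) = k := by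
  rw [sum_boole, filter_ne, card_erase_of_mem (mem_univ a)]
  simp

theorem sum_length_deletePair (X : List (Letter (k + 1))) :
    ∑ i, (deletePair i X).length = k * X.length := by
  induction X with
  | nil => simp [deletePair]
  | cons a X ih =>
    simp only [deletePair, ← List.countP_eq_length_filter, List.countP_cons] at ih ⊢
    simp only [decide_eq_true_eq] at ih ⊢
    rw [sum_add_distrib, ih, sum_ite_ne_eq, List.length_cons, mul_add_one]

theorem IsNCMatching.sum_card_filter_any_ne {X : List (Letter (k + 1))} {M : Finset (ℕ × ℕ)}
    (hM : IsNCMatching X M) :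
    ∑ i, #{p ∈ M | X[p.2]?.any (·.1 ≠ i)} = k * #M := by
  simp_rw [card_filter]
  rw [sum_comm, card_eq_sum_ones, mul_sum, mul_one]
  refine sum_congr rfl fun p hp => ?_
  have hlt := (hM.1 p hp).2.1
  rw [List.getElem?_eq_getElem hlt]
  simpa using sum_ite_ne_eq X[p.2].1

theorem sum_ell_deletePair_le (X : List (Letter (k + 1))) :
    ∑ i, ell (deletePair i X) ≤ k * ell X := by
  obtain ⟨M, hM, hell⟩ := exists_isNCMatching_ell_eq X
  have hdel := sum_le_sum fun i (_ : i ∈ univ) =>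
    hM.ell_filter_add_two_mul_card_le (·.1 ≠ i) fun _ => rfl
  rw [sum_add_distrib, ← mul_sum, hM.sum_card_filter_any_ne] at hdel
  have hlen := sum_length_deletePair X
  have hcard := hM.two_mul_card_le_s14
  simp only [deletePair] at hlen ⊢
  rw [hell, Nat.mul_sub, mul_left_comm]
  omega

end Deletion

section Counting

variable {A B β : Type*} [AddCommMonoid β]

theorem sum_fun_fin_succ [Fintype A] (n : ℕ) (F : (Fin (n + 1) → A) → β) :
    ∑ w, F w = ∑ a, ∑ w : Fin n → A, F (Fin.cons a w) := by
  rw [← Fintype.sum_prod_type']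
  exact (Fintype.sum_equiv (Fin.consEquiv fun _ => A) _ _ fun _ => rfl).symm

theorem sum_map_ofFn_succ [Fintype B] (e : B → A) (n : ℕ) (f : List A → β) :
    ∑ v : Fin (n + 1) → B, f ((List.ofFn v).map e) =
      ∑ v : Fin n → B, ∑ b, f (e b :: (List.ofFn v).map e) := by
  rw [sum_fun_fin_succ, sum_comm]
  simp [List.ofFn_succ]

variable [Fintype A] [Fintype B]

theorem sum_filter_ofFn_succ {e : B ↪ A} {P : A → Bool} (hP : ∀ a, P a = true ↔ a ∈ Set.range e)
    (n : ℕ) (f : List A → β) :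
    ∑ w : Fin (n + 1) → A, f ((List.ofFn w).filter P) =
      ∑ w : Fin n → A, ∑ b, f (e b :: (List.ofFn w).filter P) +
        ∑ a with ¬P a = true, ∑ w : Fin n → A, f ((List.ofFn w).filter P) := by
  have hrange : ({a | P a = true} : Finset A) = univ.map e := by
    ext a
    simp [hP]
  rw [sum_fun_fin_succ, ← sum_filter_add_sum_filter_not _ (fun a => P a = true), hrange, sum_map,
    sum_comm]
  congr 1
  · simp [List.ofFn_succ, hP]
  · refine sum_congr rfl fun a ha => ?_
    simp_all [List.ofFn_succ]

variable [PartialOrder β] [IsOrderedAddMonoid β]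

/-- Given its length, the `P`-subword of a uniform word over `A` is a uniform word over
`range e`; so an inequality between `f` and `g` on uniform words over `B` transfers. -/
theorem sum_filter_ofFn_le {e : B ↪ A} {P : A → Bool} (hP : ∀ a, P a = true ↔ a ∈ Set.range e)
    {f g : List A → β}
    (hfg : ∀ m, ∑ v : Fin m → B, f ((List.ofFn v).map e) ≤
      ∑ v : Fin m → B, g ((List.ofFn v).map e))
    (n : ℕ) :
    ∑ w : Fin n → A, f ((List.ofFn w).filter P) ≤ ∑ w : Fin n → A, g ((List.ofFn w).filter P) := by
  induction n generalizing f g with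
  | zero => simpa using hfg 0
  | succ n ih =>
    rw [sum_filter_ofFn_succ hP, sum_filter_ofFn_succ hP]
    refine add_le_add (ih (f := fun l => ∑ b, f (e b :: l)) (g := fun l => ∑ b, g (e b :: l))
      fun m => ?_) (sum_le_sum fun _ _ => ih hfg)
    simpa only [sum_map_ofFn_succ, List.map_cons] using hfg (m + 1)

end Counting

section Asymptotics

theorem Lk_nonneg (k n : ℕ) : 0 ≤ Lk k n := by
  unfold Lk
  positivity

theorem nat_mul_lambda_le_Lk (k m : ℕ) : m * lambda k ≤ Lk k m := by
  rcases Nat.eq_zero_or_pos m with rfl | hm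
  · simpa using Lk_nonneg k 0
  · have hbdd : BddBelow (Set.range fun n : ℕ+ => Lk k n / n) :=
      ⟨0, Set.forall_mem_range.2 fun n => div_nonneg (Lk_nonneg k n) n.1.cast_nonneg⟩
    have := ciInf_le hbdd ⟨m, hm⟩
    rwa [le_div_iff₀ (by simpa using hm), mul_comm] at this

theorem sum_ell_ofFn {k : ℕ} (hk : k ≠ 0) (n : ℕ) :
    ∑ w : Fin n → Letter k, (ell (List.ofFn w) : ℝ) = (2 * k) ^ n * Lk k n := by
  rw [Lk, mul_div_cancel₀]
  positivity

def Letter.embedAbove {k : ℕ} (i : Fin (k + 1)) : Letter k ↪ Letter (k + 1) :=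
  i.succAboveEmb.prodMap (Function.Embedding.refl Bool)

theorem Letter.range_embedAbove {k : ℕ} (i : Fin (k + 1)) :
    Set.range (Letter.embedAbove i) = {a | a.1 ≠ i} := by
  ext ⟨c, s⟩
  simp [Letter.embedAbove]

theorem lambda_mul_sum_length_deletePair_le {k : ℕ} (hk : k ≠ 0) (n : ℕ) (i : Fin (k + 1)) :
    lambda k * ∑ w : Fin n → Letter (k + 1), ((deletePair i (List.ofFn w)).length : ℝ) ≤
      ∑ w : Fin n → Letter (k + 1), (ell (deletePair i (List.ofFn w)) : ℝ) := by
  rw [mul_sum]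
  refine sum_filter_ofFn_le (e := Letter.embedAbove i) (P := fun a => a.1 ≠ i)
    (f := fun l => lambda k * l.length) (g := fun l => ell l) (by simp [Letter.range_embedAbove])
    (fun m => ?_) n
  simp only [List.length_map, List.length_ofFn, ell_map (Letter.embedAbove i).injective
    (fun _ => rfl), sum_ell_ofFn hk, sum_const, card_univ, nsmul_eq_mul]
  have hcard : (Fintype.card (Fin m → Letter k) : ℝ) = (2 * k) ^ m := by
    simp [mul_comm]
  rw [hcard, mul_comm (lambda k)]
  exact mul_le_mul_of_nonneg_left (nat_mul_lambda_le_Lk k m) (by positivity)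

theorem lambda_mul_le_Lk_succ {k : ℕ} (hk : k ≠ 0) (n : ℕ) : lambda k * n ≤ Lk (k + 1) n := by
  have hpos : (0 : ℝ) < k * (2 * (k + 1 : ℕ)) ^ n := by positivity
  refine le_of_mul_le_mul_left ?_ hpos
  calc k * (2 * (k + 1 : ℕ)) ^ n * (lambda k * n)
      = ∑ i, lambda k *
          ∑ w : Fin n → Letter (k + 1), ((deletePair i (List.ofFn w)).length : ℝ) := by
        rw [← mul_sum, sum_comm]
        simp_rw [← Nat.cast_sum, sum_length_deletePair, List.length_ofFn]
        simp only [sum_const, card_univ, Fintype.card_pi, Fintype.card_prod, Fintype.card_fin,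
          Fintype.card_bool, prod_const, smul_eq_mul]
        push_cast
        ring
    _ ≤ ∑ i, ∑ w : Fin n → Letter (k + 1), (ell (deletePair i (List.ofFn w)) : ℝ) :=
        sum_le_sum fun i _ => lambda_mul_sum_length_deletePair_le hk n i
    _ = ∑ w : Fin n → Letter (k + 1), ∑ i, (ell (deletePair i (List.ofFn w)) : ℝ) := sum_comm
    _ ≤ ∑ w : Fin n → Letter (k + 1), k * (ell (List.ofFn w) : ℝ) :=
        sum_le_sum fun w _ => by exact_mod_cast sum_ell_deletePair_le (List.ofFn w)
    _ = k * (2 * (k + 1 : ℕ)) ^ n * Lk (k + 1) n := by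
        rw [← mul_sum, sum_ell_ofFn k.succ_ne_zero, mul_assoc]

end Asymptotics

/-- `λ_k` is nondecreasing in `k`. -/
theorem lambda_monotone (k : ℕ) (hk : 1 ≤ k) : lambda k ≤ lambda (k + 1) :=
  le_ciInf fun n => (le_div_iff₀ (by positivity)).2 (lambda_mul_le_Lk_succ (by omega) n)
end
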